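/- Shannon sampling uniqueness in one dimension: Let Ω > 0 and 0 < h ≤ π/Ω. If f, g ∈ L²(ℝ) are continuous functions whose Fourier transforms are supported in the interval [-Ω, Ω], and f(m h) = g(m h) for every integer m, then f = g. -/

import Mathlib

/-!
With `T = 2π/h`, the hypothesis `h ≤ π/Ω` puts the support `[-Ω, Ω]` of `D = F - G` inside one
period window `[-π/h, π/h]`, and the sample differences `f(mh) - g(mh)` are, up to the factor
`2π`, the Fourier coefficients of `D` viewed on the circle `ℝ/Tℤ`. Integration against `D` is a
continuous functional on `C(ℝ/Tℤ)` that kills every character, hence (Stone–Weierstrass) kills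
everything; in particular `∫ D φ = 0` for every smooth `φ` supported in the open window, so
`D = 0` a.e. and the inverse transforms `f`, `g` agree.
-/

open MeasureTheory Set

noncomputable section

/-- Inverse Fourier transform on `ℝ` with the convention
`f(t) = (2π)⁻¹ ∫ F(ω) e^{iωt} dω`, so that a "Fourier transform supported in
`[-Ω, Ω]`" refers to the angular-frequency variable `ω`. -/
def invFourier1 (F : ℝ → ℂ) (t : ℝ) : ℂ :=
  (1 / (2 * Real.pi) : ℂ) * ∫ ω : ℝ, Complex.exp (Complex.I * ω * t) * F ω

namespace AddCircle

variable {T : ℝ} [Fact (0 < T)]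

theorem continuousLinearMap_eq_zero_of_fourier {E : Type*} [NormedAddCommGroup E]
    [NormedSpace ℂ E] (L : C(AddCircle T, ℂ) →L[ℂ] E) (h : ∀ n : ℤ, L (fourier n) = 0) :
    L = 0 :=
  ContinuousLinearMap.ext_on
    (Submodule.dense_iff_topologicalClosure_eq_top.mpr span_fourier_closure_eq_top)
    (by rintro _ ⟨n, rfl⟩; exact h n)

theorem integrable_mul_coe {D : ℝ → ℂ} (hD : Integrable D) (u : C(AddCircle T, ℂ)) :
    Integrable fun ω : ℝ => D ω * u ω :=
  hD.mul_bdd ((u.continuous.comp (AddCircle.continuous_mk' T)).aestronglyMeasurable)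
    (.of_forall fun _ => u.norm_coe_le_norm _)

def integralMulCLM {D : ℝ → ℂ} (hD : Integrable D) : C(AddCircle T, ℂ) →L[ℂ] ℂ :=
  LinearMap.mkContinuous
    { toFun := fun u => ∫ ω : ℝ, D ω * u ω
      map_add' := fun u v => by
        simp only [ContinuousMap.add_apply, mul_add]
        exact integral_add (integrable_mul_coe hD u) (integrable_mul_coe hD v)
      map_smul' := fun c u => by
        simp only [ContinuousMap.smul_apply, smul_eq_mul, mul_left_comm _ c, integral_const_mul,
          RingHom.id_apply] }
    (∫ ω : ℝ, ‖D ω‖) fun u => by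
      calc ‖∫ ω : ℝ, D ω * u ω‖ ≤ ∫ ω : ℝ, ‖D ω‖ * ‖u‖ :=
            norm_integral_le_of_norm_le (hD.norm.mul_const _) <| .of_forall fun _ => by
              rw [norm_mul]; gcongr; exact u.norm_coe_le_norm _
        _ = (∫ ω : ℝ, ‖D ω‖) * ‖u‖ := integral_mul_const _ _

theorem integralMulCLM_apply {D : ℝ → ℂ} (hD : Integrable D) (u : C(AddCircle T, ℂ)) :
    integralMulCLM hD u = ∫ ω : ℝ, D ω * u ω :=
  rfl

theorem ae_eq_zero_of_integral_mul_fourier_eq_zero {D : ℝ → ℂ} (hD : Integrable D) (a : ℝ)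
    (hsupp : ∀ ω : ℝ, ω ∉ Icc a (a + T) → D ω = 0)
    (h : ∀ n : ℤ, ∫ ω : ℝ, D ω * fourier n (ω : AddCircle T) = 0) :
    ∀ᵐ ω, D ω = 0 := by
  have hL : integralMulCLM hD = 0 := continuousLinearMap_eq_zero_of_fourier _ h
  have hsupp_ae : ∀ᵐ ω, ω ∉ Ioo a (a + T) → D ω = 0 := by
    filter_upwards [(Ioo_ae_eq_Icc (a := a) (b := a + T) (μ := volume)).mem_iff] with ω hω hω'
    exact hsupp ω (hω.not.mp hω')
  have hIoo : ∀ᵐ ω, ω ∈ Ioo a (a + T) → D ω = 0 := by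
    refine isOpen_Ioo.ae_eq_zero_of_integral_contDiff_smul_eq_zero
      (hD.locallyIntegrable.locallyIntegrableOn _) fun g g_diff _ g_supp => ?_
    have hg_out : ∀ x ∉ Ioo a (a + T), g x = 0 := fun x hx =>
      image_eq_zero_of_notMem_tsupport fun hx' => hx (g_supp hx')
    let u : C(AddCircle T, ℂ) := ⟨liftIco T a fun x => (g x : ℂ), liftIco_continuous
      (by simp [hg_out a (by simp), hg_out (a + T) (by simp)])
      (Complex.continuous_ofReal.comp g_diff.continuous).continuousOn⟩
    calc ∫ ω, g ω • D ω = ∫ ω : ℝ, D ω * u ω := integral_congr_ae <| by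
          filter_upwards [hsupp_ae] with ω hω
          by_cases hmem : ω ∈ Ioo a (a + T)
          · simp [u, liftIco_coe_apply (Ioo_subset_Ico_self hmem), Complex.real_smul, mul_comm]
          · simp [hω hmem]
      _ = 0 := by rw [← integralMulCLM_apply hD, hL]; rfl
  filter_upwards [hIoo, hsupp_ae] with ω hin hout
  by_cases hmem : ω ∈ Ioo a (a + T)
  exacts [hin hmem, hout hmem]

end AddCircle

open Real in
theorem fourier_coe_two_pi_div (h : ℝ) (n : ℤ) (ω : ℝ) :
    fourier n (ω : AddCircle (2 * π / h)) = Complex.exp (Complex.I * ω * ((n * h : ℝ) : ℂ)) := by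
  rw [fourier_coe_apply]
  congr 1
  push_cast
  field_simp

open Real in
theorem integral_mul_fourier_eq_invFourier1 (F : ℝ → ℂ) (h : ℝ) (m : ℤ) :
    ∫ ω : ℝ, F ω * fourier m (ω : AddCircle (2 * π / h)) = 2 * π * invFourier1 F (m * h) := by
  rw [invFourier1, ← mul_assoc, mul_one_div_cancel (by simp [pi_ne_zero]), one_mul]
  simp only [fourier_coe_two_pi_div, mul_comm (F _)]

theorem invFourier1_congr_ae {F G : ℝ → ℂ} (hFG : F =ᵐ[volume] G) :
    invFourier1 F = invFourier1 G := by
  funext t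
  simp only [invFourier1]
  congr 1
  exact integral_congr_ae (hFG.mono fun ω hω => by simp only [hω])

theorem shannon_uniqueness_1d_general
    (Ω h : ℝ) (hΩ : 0 < Ω) (hh0 : 0 < h) (hh : h ≤ Real.pi / Ω)
    (f g F G : ℝ → ℂ)
    (hF1 : Integrable F) (hG1 : Integrable G)
    (hFsupp : ∀ ω : ℝ, ω ∉ Set.Icc (-Ω) Ω → F ω = 0)
    (hGsupp : ∀ ω : ℝ, ω ∉ Set.Icc (-Ω) Ω → G ω = 0)
    (hf : f = invFourier1 F) (hg : g = invFourier1 G)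
    (hsamp : ∀ m : ℤ, f (m * h) = g (m * h)) :
    f = g := by
  have : Fact (0 < 2 * Real.pi / h) := ⟨by positivity⟩
  have hΩh : Ω ≤ Real.pi / h := by
    rw [le_div_iff₀ hh0]
    rw [le_div_iff₀ hΩ] at hh
    linarith
  have hwindow : -(Real.pi / h) + 2 * Real.pi / h = Real.pi / h := by ring
  have hsupp : ∀ ω ∉ Icc (-(Real.pi / h)) (-(Real.pi / h) + 2 * Real.pi / h), (F - G) ω = 0 := by
    intro ω hω
    have hω' : ω ∉ Icc (-Ω) Ω := fun hm => hω ⟨by linarith [hm.1], by linarith [hm.2]⟩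
    simp [hFsupp ω hω', hGsupp ω hω']
  have hchar : ∀ m : ℤ, ∫ ω : ℝ, (F - G) ω * fourier m (ω : AddCircle (2 * Real.pi / h)) = 0 := by
    intro m
    simp only [Pi.sub_apply, sub_mul]
    rw [integral_sub (AddCircle.integrable_mul_coe hF1 _) (AddCircle.integrable_mul_coe hG1 _),
      integral_mul_fourier_eq_invFourier1 F, integral_mul_fourier_eq_invFourier1 G,
      ← hf, ← hg, hsamp, sub_self]
  have hFG : F =ᵐ[volume] G := by
    filter_upwards [AddCircle.ae_eq_zero_of_integral_mul_fourier_eq_zero (hF1.sub hG1) _ hsupp hchar]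
      with ω hω
    exact sub_eq_zero.mp hω
  rw [hf, hg, invFourier1_congr_ae hFG]

/-- **Shannon sampling uniqueness in one dimension.**  If `f, g ∈ L²(ℝ)` are
continuous with Fourier transforms `F, G` supported in `[-Ω, Ω]` and their
samples on the grid `hℤ` with `0 < h ≤ π/Ω` coincide, then `f = g`. -/
theorem shannon_uniqueness_1d
    (Ω h : ℝ) (hΩ : 0 < Ω) (hh0 : 0 < h) (hh : h ≤ Real.pi / Ω)
    (f g F G : ℝ → ℂ)
    (hF1 : Integrable F) (hG1 : Integrable G)
    (hFsupp : ∀ ω : ℝ, ω ∉ Set.Icc (-Ω) Ω → F ω = 0)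
    (hGsupp : ∀ ω : ℝ, ω ∉ Set.Icc (-Ω) Ω → G ω = 0)
    (hf : f = invFourier1 F) (hg : g = invFourier1 G)
    (hfL2 : MemLp f 2 volume) (hgL2 : MemLp g 2 volume)
    (hfc : Continuous f) (hgc : Continuous g)
    (hsamp : ∀ m : ℤ, f (m * h) = g (m * h)) :
    f = g :=
  shannon_uniqueness_1d_general Ω h hΩ hh0 hh f g F G hF1 hG1 hFsupp hGsupp hf hg hsamp
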